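/- Estimate of the transport and tilt error terms: there exists a constant C = C(κ, Λ) < ∞, depending only on κ and Λ, such that ∫_{ℝ^d} ( |A : ((n−ξ) ⊗ (n−ξ))| + |tr A| (1 − ξ·n) + |(n−ξ)·V| + |g| ) |∇ψ| dx ≤ C E[u|ξ]. -/

import Mathlib

open MeasureTheory Set
open scoped RealInnerProductSpace

noncomputable section

/-- `∇ψ` for `ψ(x) = ∫_0^{u x} √(2 W s) ds`, namely `√(2 W (u x)) ∇u(x)`. -/
def gradPsi {d : ℕ} (W : ℝ → ℝ) (u : EuclideanSpace ℝ (Fin d) → ℝ)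
    (x : EuclideanSpace ℝ (Fin d)) : EuclideanSpace ℝ (Fin d) :=
  Real.sqrt (2 * W (u x)) • gradient u x

/-- The relative entropy `E[u|ξ]`. -/
def relEntropy {d : ℕ} (ε : ℝ) (W : ℝ → ℝ) (u : EuclideanSpace ℝ (Fin d) → ℝ)
    (ξ : EuclideanSpace ℝ (Fin d) → EuclideanSpace ℝ (Fin d)) : ℝ :=
  ∫ x, (ε / 2 * ‖gradient u x‖ ^ 2 + ε⁻¹ * W (u x) - ⟪ξ x, gradPsi W u x⟫)

/-!
The integrand is estimated pointwise. Writing `q = ξ·n`, every error term is bounded by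
`Λ` times a multiple of `1 - q` or of `min(dist(x,I)², 1)`: the quadratic terms in `n - ξ`
because `|n - ξ|² ≤ 2(1 - q)`, the term with `V` by Young's inequality, and `g` by assumption.
The coercivity of `ξ` gives `κ min(dist(x,I)², 1) ≤ 1 - |ξ| ≤ 1 - q`. Finally, the relative entropy
density dominates `(1 - q)|∇ψ|`, since `|∇ψ| ≤ (ε/2)|∇u|² + ε⁻¹W(u)` by the AM–GM inequality and
`ξ·∇ψ = q |∇ψ|` because `n` is the direction of `∇u`.
-/

section Algebra

variable {F : Type*} [NormedAddCommGroup F] [InnerProductSpace ℝ F]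

lemma norm_sub_sq_le_two_mul_one_sub_inner {n ξ : F} (hn : ‖n‖ = 1) (hξ : ‖ξ‖ ≤ 1) :
    ‖n - ξ‖ ^ 2 ≤ 2 * (1 - ⟪ξ, n⟫) := by
  rw [norm_sub_sq_real, hn, real_inner_comm]
  nlinarith [norm_nonneg ξ]

lemma one_sub_norm_le_one_sub_inner {n ξ : F} (hn : ‖n‖ = 1) : 1 - ‖ξ‖ ≤ 1 - ⟪ξ, n⟫ := by
  have := real_inner_le_norm ξ n
  rw [hn, mul_one] at this
  linarith

lemma inner_le_one_of_norm_le_one {n ξ : F} (hn : ‖n‖ = 1) (hξ : ‖ξ‖ ≤ 1) : ⟪ξ, n⟫ ≤ 1 :=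
  (real_inner_le_norm ξ n).trans (by rw [hn, mul_one]; exact hξ)

lemma abs_inner_le_of_norm_le {a V : F} {Λ m : ℝ} (hΛ : 0 ≤ Λ) (hV : ‖V‖ ≤ Λ * m) :
    |⟪a, V⟫| ≤ Λ / 2 * ‖a‖ ^ 2 + Λ / 2 * m ^ 2 := by
  have hYoung : 0 ≤ Λ * (‖a‖ - m) ^ 2 := mul_nonneg hΛ (sq_nonneg _)
  calc |⟪a, V⟫| ≤ ‖a‖ * ‖V‖ := abs_real_inner_le_norm a V
    _ ≤ ‖a‖ * (Λ * m) := mul_le_mul_of_nonneg_left hV (norm_nonneg a)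
    _ ≤ Λ / 2 * ‖a‖ ^ 2 + Λ / 2 * m ^ 2 := by nlinarith

end Algebra

section Matrix

variable {ι : Type*} [Fintype ι] {A : Matrix ι ι ℝ} {Λ : ℝ}

lemma abs_trace_le_of_abs_le (hA : ∀ i j, |A i j| ≤ Λ) :
    |A.trace| ≤ Λ * Fintype.card ι :=
  calc |A.trace| ≤ ∑ i, |A i i| := Finset.abs_sum_le_sum_abs _ _
    _ ≤ ∑ _i : ι, Λ := Finset.sum_le_sum fun i _ => hA i i
    _ = Λ * Fintype.card ι := by simp [mul_comm]

lemma abs_quadratic_form_le_of_abs_le (hA : ∀ i j, |A i j| ≤ Λ) (a : EuclideanSpace ℝ ι) :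
    |∑ i, ∑ j, A i j * a i * a j| ≤ Λ * Fintype.card ι * ‖a‖ ^ 2 := by
  rcases isEmpty_or_nonempty ι with hι | ⟨⟨i₀⟩⟩
  · simp
  have hΛ : 0 ≤ Λ := (abs_nonneg _).trans (hA i₀ i₀)
  have hCauchySchwarz : (∑ i, |a i|) ^ 2 ≤ Fintype.card ι * ‖a‖ ^ 2 := by
    simpa [EuclideanSpace.real_norm_sq_eq] using
      sq_sum_le_card_mul_sum_sq (s := Finset.univ) (f := fun i => |a i|)
  calc |∑ i, ∑ j, A i j * a i * a j| ≤ ∑ i, ∑ j, Λ * (|a i| * |a j|) := by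
        refine (Finset.abs_sum_le_sum_abs _ _).trans (Finset.sum_le_sum fun i _ => ?_)
        refine (Finset.abs_sum_le_sum_abs _ _).trans (Finset.sum_le_sum fun j _ => ?_)
        rw [abs_mul, abs_mul, mul_assoc]
        exact mul_le_mul_of_nonneg_right (hA i j) (by positivity)
    _ = Λ * (∑ i, |a i|) ^ 2 := by
        rw [sq, Fintype.sum_mul_sum, Finset.mul_sum]
        exact Finset.sum_congr rfl fun i _ => by rw [Finset.mul_sum]
    _ ≤ Λ * Fintype.card ι * ‖a‖ ^ 2 := by
        rw [mul_assoc]; exact mul_le_mul_of_nonneg_left hCauchySchwarz hΛ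

end Matrix

lemma min_one_sq {r : ℝ} (hr : 0 ≤ r) : min r 1 ^ 2 = min (r ^ 2) 1 := by
  rcases le_total r 1 with h | h
  · rw [min_eq_left h, min_eq_left (pow_le_one₀ hr h)]
  · rw [min_eq_right h, min_eq_right (one_le_pow₀ h), one_pow]

lemma transport_tilt_terms_le {ι : Type*} [Fintype ι] {n ξ V : EuclideanSpace ℝ ι}
    {A : Matrix ι ι ℝ} {g m κ Λ : ℝ} (hκ : κ ∈ Ioc (0 : ℝ) 1) (hΛ : 0 ≤ Λ)
    (hn : ‖n‖ = 1) (hξ : ‖ξ‖ ≤ 1) (hcoerc : κ * m ^ 2 ≤ 1 - ‖ξ‖)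
    (hA : ∀ i j, |A i j| ≤ Λ) (hV : ‖V‖ ≤ Λ * m) (hg : |g| ≤ Λ * m ^ 2) :
    |∑ i, ∑ j, A i j * (n - ξ) i * (n - ξ) j| + |A.trace| * (1 - ⟪ξ, n⟫)
        + |⟪n - ξ, V⟫| + |g|
      ≤ Λ * (3 * Fintype.card ι + 5 / 2) / κ * (1 - ⟪ξ, n⟫) := by
  obtain ⟨hκ0, hκ1⟩ := hκ
  set q := ⟪ξ, n⟫
  set c : ℝ := (Fintype.card ι : ℝ)
  have hq : 0 ≤ 1 - q := sub_nonneg.2 (inner_le_one_of_norm_le_one hn hξ)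
  have hnξ := norm_sub_sq_le_two_mul_one_sub_inner hn hξ
  have hm : m ^ 2 ≤ (1 - q) / κ := by
    rw [le_div_iff₀ hκ0, mul_comm]
    exact hcoerc.trans (one_sub_norm_le_one_sub_inner hn)
  have hqκ : 1 - q ≤ (1 - q) / κ := le_div_self hq hκ0 hκ1
  have hT1 := abs_quadratic_form_le_of_abs_le hA (n - ξ)
  have hT2 := mul_le_mul_of_nonneg_right (abs_trace_le_of_abs_le hA) hq
  have hT3 := abs_inner_le_of_norm_le (a := n - ξ) hΛ hV
  have hc : 0 ≤ c := Nat.cast_nonneg _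
  calc _ ≤ Λ * (3 * c + 1) * (1 - q) + 3 * Λ / 2 * m ^ 2 := by
        nlinarith [mul_le_mul_of_nonneg_left hnξ (mul_nonneg hΛ hc),
          mul_le_mul_of_nonneg_left hnξ hΛ]
    _ ≤ Λ * (3 * c + 1) * ((1 - q) / κ) + 3 * Λ / 2 * ((1 - q) / κ) := by
        gcongr
    _ = Λ * (3 * c + 5 / 2) / κ * (1 - q) := by ring

section GinzburgLandau

variable {d : ℕ} {ε : ℝ} {W : ℝ → ℝ} {u : EuclideanSpace ℝ (Fin d) → ℝ}
  {ξ : EuclideanSpace ℝ (Fin d) → EuclideanSpace ℝ (Fin d)} {x : EuclideanSpace ℝ (Fin d)}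

def relEntropyDensity (ε : ℝ) (W : ℝ → ℝ) (u : EuclideanSpace ℝ (Fin d) → ℝ)
    (ξ : EuclideanSpace ℝ (Fin d) → EuclideanSpace ℝ (Fin d)) (x : EuclideanSpace ℝ (Fin d)) :
    ℝ :=
  ε / 2 * ‖gradient u x‖ ^ 2 + ε⁻¹ * W (u x) - ⟪ξ x, gradPsi W u x⟫

lemma relEntropy_eq_integral_relEntropyDensity :
    relEntropy ε W u ξ = ∫ x, relEntropyDensity ε W u ξ x := rfl

lemma sqrt_two_mul_mul_le {w : ℝ} (hε : 0 < ε) (hw : 0 ≤ w) (t : ℝ) :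
    Real.sqrt (2 * w) * t ≤ ε / 2 * t ^ 2 + ε⁻¹ * w := by
  have hs := Real.sq_sqrt (by linarith : (0 : ℝ) ≤ 2 * w)
  have hsq : 0 ≤ (ε * t - Real.sqrt (2 * w)) ^ 2 / (2 * ε) := by positivity
  have hgap : (ε * t - Real.sqrt (2 * w)) ^ 2 / (2 * ε)
      = ε / 2 * t ^ 2 + ε⁻¹ * w - Real.sqrt (2 * w) * t := by
    field_simp
    linear_combination hs
  linarith

lemma norm_gradPsi : ‖gradPsi W u x‖ = Real.sqrt (2 * W (u x)) * ‖gradient u x‖ := by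
  rw [gradPsi, norm_smul, Real.norm_of_nonneg (Real.sqrt_nonneg _)]

lemma inner_gradPsi_eq {n : EuclideanSpace ℝ (Fin d)}
    (hn : gradient u x ≠ 0 → n = ‖gradient u x‖⁻¹ • gradient u x) (v : EuclideanSpace ℝ (Fin d)) :
    ⟪v, gradPsi W u x⟫ = ⟪v, n⟫ * ‖gradPsi W u x‖ := by
  by_cases hG : gradient u x = 0
  · simp [gradPsi, hG]
  · rw [hn hG, norm_gradPsi, gradPsi, real_inner_smul_right, real_inner_smul_right]
    field_simp [norm_ne_zero_iff.mpr hG]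

lemma one_sub_inner_mul_norm_gradPsi_le_relEntropyDensity {n : EuclideanSpace ℝ (Fin d)}
    (hε : 0 < ε) (hW : 0 ≤ W (u x))
    (hn : gradient u x ≠ 0 → n = ‖gradient u x‖⁻¹ • gradient u x) :
    (1 - ⟪ξ x, n⟫) * ‖gradPsi W u x‖ ≤ relEntropyDensity ε W u ξ x := by
  have hAMGM := sqrt_two_mul_mul_le hε hW ‖gradient u x‖
  rw [← norm_gradPsi] at hAMGM
  rw [relEntropyDensity, inner_gradPsi_eq hn]
  linarith

end GinzburgLandau

theorem transport_and_tilt_error_estimate_general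
    (d : ℕ) (κ Λ : ℝ) (hκ : κ ∈ Ioc (0:ℝ) 1) (hΛ : 0 ≤ Λ) :
    ∃ C : ℝ, ∀ ε : ℝ, 0 < ε →
    ∀ W : ℝ → ℝ, Continuous W → (∀ s, 0 ≤ W s) →
    ∀ u : EuclideanSpace ℝ (Fin d) → ℝ, ContDiff ℝ 1 u →
      Integrable (fun x => ε / 2 * ‖gradient u x‖ ^ 2 + ε⁻¹ * W (u x)) →
    ∀ n : EuclideanSpace ℝ (Fin d) → EuclideanSpace ℝ (Fin d),
      (∀ x, ‖n x‖ = 1) →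
      (∀ x, gradient u x ≠ 0 → n x = ‖gradient u x‖⁻¹ • gradient u x) →
    ∀ ξ : EuclideanSpace ℝ (Fin d) → EuclideanSpace ℝ (Fin d),
      Measurable ξ → (∀ x, ‖ξ x‖ ≤ 1) →
      Integrable (fun x => ⟪ξ x, gradPsi W u x⟫) →
    ∀ I : Set (EuclideanSpace ℝ (Fin d)), I.Nonempty → IsClosed I →
      (∀ x, κ * min (Metric.infDist x I ^ 2) 1 ≤ 1 - ‖ξ x‖) →
    ∀ A : EuclideanSpace ℝ (Fin d) → Matrix (Fin d) (Fin d) ℝ,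
      (∀ i j, Measurable (fun x => A x i j)) → (∀ x i j, |A x i j| ≤ Λ) →
    ∀ V : EuclideanSpace ℝ (Fin d) → EuclideanSpace ℝ (Fin d),
      Measurable V → (∀ x, ‖V x‖ ≤ Λ * min (Metric.infDist x I) 1) →
    ∀ g : EuclideanSpace ℝ (Fin d) → ℝ,
      Measurable g → (∀ x, |g x| ≤ Λ * min (Metric.infDist x I ^ 2) 1) →
    (∫ x, (|∑ i, ∑ j, A x i j * (n x - ξ x) i * (n x - ξ x) j|
          + |Matrix.trace (A x)| * (1 - ⟪ξ x, n x⟫)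
          + |⟪n x - ξ x, V x⟫| + |g x|) * ‖gradPsi W u x‖)
      ≤ C * relEntropy ε W u ξ := by
  set C := Λ * (3 * d + 5 / 2) / κ
  refine ⟨C, fun ε hε W _ hW u _ hInt n hn hngrad ξ _ hξ hξInt I _ _ hcoerc A _ hA V _ hV g _ hg
    => ?_⟩
  have hC : 0 ≤ C := div_nonneg (by positivity) hκ.1.le
  have hpointwise : ∀ x, (|∑ i, ∑ j, A x i j * (n x - ξ x) i * (n x - ξ x) j|
      + |Matrix.trace (A x)| * (1 - ⟪ξ x, n x⟫) + |⟪n x - ξ x, V x⟫| + |g x|)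
      ≤ C * (1 - ⟪ξ x, n x⟫) := fun x => by
    have hdist := min_one_sq (Metric.infDist_nonneg (x := x) (s := I))
    simpa only [Fintype.card_fin] using transport_tilt_terms_le hκ hΛ (hn x) (hξ x)
      (hdist ▸ hcoerc x) (hA x) (hV x) (hdist ▸ hg x)
  rw [relEntropy_eq_integral_relEntropyDensity, ← integral_const_mul]
  refine integral_mono_of_nonneg (Filter.Eventually.of_forall fun x => ?_)
    ((hInt.sub hξInt).const_mul C) (Filter.Eventually.of_forall fun x => ?_)
  · have := mul_nonneg (abs_nonneg (A x).trace)
      (sub_nonneg.2 (inner_le_one_of_norm_le_one (hn x) (hξ x)))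
    positivity
  · calc _ ≤ C * (1 - ⟪ξ x, n x⟫) * ‖gradPsi W u x‖ :=
          mul_le_mul_of_nonneg_right (hpointwise x) (norm_nonneg _)
      _ ≤ C * relEntropyDensity ε W u ξ x := by
          rw [mul_assoc]
          exact mul_le_mul_of_nonneg_left
            (one_sub_inner_mul_norm_gradPsi_le_relEntropyDensity hε (hW _) (hngrad x)) hC

/-- Estimate of the transport and tilt error terms. The constant `C` depends only on
`d`, `κ` and `Λ`. -/
theorem transport_and_tilt_error_estimate
    (d : ℕ) (hd : 1 ≤ d) (κ Λ : ℝ) (hκ : κ ∈ Ioc (0:ℝ) 1) (hΛ : 0 ≤ Λ) :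
    ∃ C : ℝ, ∀ ε : ℝ, 0 < ε →
    ∀ W : ℝ → ℝ, Continuous W → (∀ s, 0 ≤ W s) →
    ∀ u : EuclideanSpace ℝ (Fin d) → ℝ, ContDiff ℝ 1 u →
      Integrable (fun x => ε / 2 * ‖gradient u x‖ ^ 2 + ε⁻¹ * W (u x)) →
    ∀ n : EuclideanSpace ℝ (Fin d) → EuclideanSpace ℝ (Fin d),
      (∀ x, ‖n x‖ = 1) →
      (∀ x, gradient u x ≠ 0 → n x = ‖gradient u x‖⁻¹ • gradient u x) →
    ∀ ξ : EuclideanSpace ℝ (Fin d) → EuclideanSpace ℝ (Fin d),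
      Measurable ξ → (∀ x, ‖ξ x‖ ≤ 1) →
      Integrable (fun x => ⟪ξ x, gradPsi W u x⟫) →
    ∀ I : Set (EuclideanSpace ℝ (Fin d)), I.Nonempty → IsClosed I →
      (∀ x, κ * min (Metric.infDist x I ^ 2) 1 ≤ 1 - ‖ξ x‖) →
    ∀ A : EuclideanSpace ℝ (Fin d) → Matrix (Fin d) (Fin d) ℝ,
      (∀ i j, Measurable (fun x => A x i j)) → (∀ x i j, |A x i j| ≤ Λ) →
    ∀ V : EuclideanSpace ℝ (Fin d) → EuclideanSpace ℝ (Fin d),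
      Measurable V → (∀ x, ‖V x‖ ≤ Λ * min (Metric.infDist x I) 1) →
    ∀ g : EuclideanSpace ℝ (Fin d) → ℝ,
      Measurable g → (∀ x, |g x| ≤ Λ * min (Metric.infDist x I ^ 2) 1) →
    (∫ x, (|∑ i, ∑ j, A x i j * (n x - ξ x) i * (n x - ξ x) j|
          + |Matrix.trace (A x)| * (1 - ⟪ξ x, n x⟫)
          + |⟪n x - ξ x, V x⟫| + |g x|) * ‖gradPsi W u x‖)
      ≤ C * relEntropy ε W u ξ :=
  transport_and_tilt_error_estimate_general d κ Λ hκ hΛ
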